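/- arXiv:1402.5717 — 3 statements merged into one kernel-verified Lean document; each statement's English description precedes it below -/
import Mathlib

section
/- Fix an integer n ≥ 1 and λ ∈ (0,n). There is a constant C = C(n,λ) > 0 such that every nonnegative Borel function ω on ℝ^{n+1}_+ with ∫_{ℝⁿ} Nω dΛ_λ^{(∞)} ≤ 1 satisfies ω(x,t) ≤ C t^{−λ} for every (x,t) ∈ ℝ^{n+1}_+. -/
open MeasureTheory Filter Metric Set
open scoped ENNReal NNReal Topology

noncomputable section

abbrev XX (n : ℕ) := EuclideanSpace ℝ (Fin n)

/-- λ-dimensional Hausdorff capacity. -/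
def hausCap (n : ℕ) (lam : ℝ) (E : Set (XX n)) : ℝ≥0∞ :=
  ⨅ (c : ℕ → XX n) (r : ℕ → ℝ) (_ : ∀ j, 0 < r j)
    (_ : E ⊆ ⋃ j, Metric.ball (c j) (r j)), ∑' j, ENNReal.ofReal ((r j) ^ lam)

/-- Choquet integral against the Hausdorff capacity. -/
def choquetInt (n : ℕ) (lam : ℝ) (f : XX n → ℝ≥0∞) : ℝ≥0∞ :=
  ∫⁻ t in Set.Ioi (0 : ℝ), hausCap n lam {x | ENNReal.ofReal t < f x}

/-- Nontangential maximal function of a function on the upper half-space. -/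
def ntMax (n : ℕ) (ω : XX n × ℝ → ℝ≥0∞) (x : XX n) : ℝ≥0∞ :=
  ⨆ (q : XX n × ℝ) (_ : 0 < q.2 ∧ dist x q.1 < q.2), ω q

/-- The upper half-space `ℝ^{n+1}_+`. -/
def upperHalf (n : ℕ) : Set (XX n × ℝ) := {q | 0 < q.2}

/-- Admissible weights in the definition of the `FṪ^λ` quasi-norm. -/
def Admissible (n : ℕ) (lam : ℝ) (F : XX n × ℝ → ℂ) (ω : XX n × ℝ → ℝ≥0∞) : Prop :=
  Measurable ω ∧ choquetInt n lam (ntMax n ω) ≤ 1 ∧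
    ∀ q ∈ upperHalf n, ω q = 0 → F q = 0

/-- The `FṪ^λ` quasi-norm. -/
def FTnorm (n : ℕ) (lam : ℝ) (F : XX n × ℝ → ℂ) : ℝ≥0∞ :=
  ⨅ (ω : XX n × ℝ → ℝ≥0∞) (_ : Admissible n lam F ω),
    (∫⁻ q in upperHalf n, ((‖F q‖₊ : ℝ≥0∞) ^ 2 / ω q) * ENNReal.ofReal q.2⁻¹) ^ (1/2 : ℝ)

/-- The tent over the ball `B(xB, rB)`. -/
def tent (n : ℕ) (xB : XX n) (rB : ℝ) : Set (XX n × ℝ) :=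
  {q | 0 < q.2 ∧ Metric.ball q.1 q.2 ⊆ Metric.ball xB rB}

/-- An `FṪ^λ`-atom. -/
def IsTentAtom (n : ℕ) (lam : ℝ) (a : XX n × ℝ → ℂ) : Prop :=
  Measurable a ∧ ∃ (xB : XX n) (rB : ℝ), 0 < rB ∧
    (∀ q, q ∉ tent n xB rB → a q = 0) ∧
    (∫⁻ q in tent n xB rB, (‖a q‖₊ : ℝ≥0∞) ^ 2 * ENNReal.ofReal q.2⁻¹) ≤ ENNReal.ofReal (rB ^ (-lam))

/-- The tent space `T²₂` norm. -/
def T22norm (n : ℕ) (F : XX n × ℝ → ℂ) : ℝ≥0∞ :=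
  (∫⁻ x : XX n, ∫⁻ q in {q : XX n × ℝ | 0 < q.2 ∧ dist x q.1 < q.2},
      (‖F q‖₊ : ℝ≥0∞) ^ 2 * ENNReal.ofReal (q.2 ^ (-(n : ℝ) - 1))) ^ (1/2 : ℝ)

end

/-! For `y ∈ B(x, t)` the point `(x, t)` lies in the cone over `y`, so `Nω ≥ ω(x, t)` on
`B(x, t)` and the Choquet integral of `Nω` is at least `ω(x, t) Λ(B(x, t))`. Comparing the
Lebesgue measure of a ball with that of a cover by smaller balls gives `Λ(B(x, t)) ≥ t ^ λ` for
`λ ≤ n`, hence `ω(x, t) ≤ t ^ (-λ)`. -/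

lemma le_ntMax {n : ℕ} (ω : XX n × ℝ → ℝ≥0∞) {x y : XX n} {t : ℝ} (ht : 0 < t)
    (hxy : dist x y < t) : ω (y, t) ≤ ntMax n ω x :=
  le_iSup₂ (f := fun (q : XX n × ℝ) (_ : 0 < q.2 ∧ dist x q.1 < q.2) => ω q) (y, t) ⟨ht, hxy⟩

lemma hausCap_mono {n : ℕ} {lam : ℝ} {E F : Set (XX n)} (h : E ⊆ F) :
    hausCap n lam E ≤ hausCap n lam F :=
  le_iInf fun c => le_iInf fun r => le_iInf fun hr => le_iInf fun hcov =>
    iInf_le_of_le c <| iInf_le_of_le r <| iInf_le_of_le hr <| iInf_le_of_le (h.trans hcov) le_rfl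

lemma volume_Ioi_inter_setOf_ofReal_lt (a : ℝ≥0∞) :
    volume (Ioi (0 : ℝ) ∩ {t | ENNReal.ofReal t < a}) = a := by
  rcases eq_or_ne a ⊤ with rfl | ha
  · simp
  · have hset : Ioi (0 : ℝ) ∩ {t | ENNReal.ofReal t < a} = Ioo 0 a.toReal := by
      ext t
      simp only [mem_inter_iff, mem_Ioi, mem_ofPred_eq, mem_Ioo, and_congr_right_iff]
      exact fun ht => ENNReal.ofReal_lt_iff_lt_toReal ht.le ha
    rw [hset, Real.volume_Ioo, sub_zero, ENNReal.ofReal_toReal ha]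

lemma mul_hausCap_le_choquetInt {n : ℕ} {lam : ℝ} {f : XX n → ℝ≥0∞} {E : Set (XX n)}
    {a : ℝ≥0∞} (h : ∀ x ∈ E, a ≤ f x) : a * hausCap n lam E ≤ choquetInt n lam f := by
  set S := Ioi (0 : ℝ) ∩ {t | ENNReal.ofReal t < a}
  have hS : MeasurableSet S :=
    measurableSet_Ioi.inter (measurableSet_lt ENNReal.measurable_ofReal measurable_const)
  have hlevel : ∀ t ∈ S, E ⊆ {x | ENNReal.ofReal t < f x} := fun t ht x hx =>
    ht.2.trans_le (h x hx)
  calc a * hausCap n lam E = ∫⁻ _ in S, hausCap n lam E := by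
        rw [setLIntegral_const, volume_Ioi_inter_setOf_ofReal_lt, mul_comm]
    _ ≤ ∫⁻ t in S, hausCap n lam {x | ENNReal.ofReal t < f x} :=
        setLIntegral_mono' hS fun t ht => hausCap_mono (hlevel t ht)
    _ ≤ choquetInt n lam f := lintegral_mono_set inter_subset_left

lemma ofReal_pow_finrank_le_tsum_of_ball_subset_iUnion {E : Type*} [NormedAddCommGroup E]
    [NormedSpace ℝ E] [MeasurableSpace E] [BorelSpace E] [FiniteDimensional ℝ E]
    {x : E} {t : ℝ} (ht : 0 < t) {c : ℕ → E} {r : ℕ → ℝ} (hr : ∀ j, 0 < r j)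
    (hcov : ball x t ⊆ ⋃ j, ball (c j) (r j)) :
    ENNReal.ofReal (t ^ Module.finrank ℝ E) ≤ ∑' j, ENNReal.ofReal (r j ^ Module.finrank ℝ E) := by
  let μ : Measure E := Measure.addHaar
  have hvol : μ (ball x t) ≤ ∑' j, μ (ball (c j) (r j)) :=
    (measure_mono hcov).trans (measure_iUnion_le _)
  simp_rw [Measure.addHaar_ball_of_pos μ _ ht, Measure.addHaar_ball_of_pos μ _ (hr _),
    ENNReal.tsum_mul_right] at hvol
  exact (ENNReal.mul_le_mul_iff_left (measure_ball_pos μ 0 one_pos).ne'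
    measure_ball_lt_top.ne).mp hvol

lemma pow_le_rpow_sub_mul_rpow {r t lam : ℝ} {n : ℕ} (hr : 0 < r) (hrt : r ≤ t)
    (hlamn : lam ≤ n) : r ^ n ≤ t ^ ((n : ℝ) - lam) * r ^ lam := by
  calc r ^ n = r ^ ((n : ℝ) - lam) * r ^ lam := by
        rw [← Real.rpow_add hr, sub_add_cancel, Real.rpow_natCast]
    _ ≤ t ^ ((n : ℝ) - lam) * r ^ lam := by gcongr

lemma rpow_le_hausCap_ball {n : ℕ} {lam : ℝ} (hlam0 : 0 ≤ lam) (hlamn : lam ≤ n) (x : XX n)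
    {t : ℝ} (ht : 0 < t) : ENNReal.ofReal (t ^ lam) ≤ hausCap n lam (ball x t) := by
  refine le_iInf fun c => le_iInf fun r => le_iInf fun hr => le_iInf fun hcov => ?_
  by_cases hlarge : ∃ j, t ≤ r j
  · obtain ⟨j, hj⟩ := hlarge
    exact (ENNReal.ofReal_le_ofReal (Real.rpow_le_rpow ht.le hj hlam0)).trans
      (ENNReal.le_tsum j)
  push Not at hlarge
  have hvol := ofReal_pow_finrank_le_tsum_of_ball_subset_iUnion ht hr hcov
  rw [finrank_euclideanSpace_fin] at hvol
  set K := ENNReal.ofReal (t ^ ((n : ℝ) - lam))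
  have hK : K ≠ 0 := (ENNReal.ofReal_pos.mpr (Real.rpow_pos_of_pos ht _)).ne'
  have ht_pow : ENNReal.ofReal (t ^ n) = K * ENNReal.ofReal (t ^ lam) := by
    rw [← ENNReal.ofReal_mul (Real.rpow_nonneg ht.le _), ← Real.rpow_add ht, sub_add_cancel,
      Real.rpow_natCast]
  refine (ENNReal.mul_le_mul_iff_right hK ENNReal.ofReal_ne_top).mp ?_
  calc K * ENNReal.ofReal (t ^ lam) = ENNReal.ofReal (t ^ n) := ht_pow.symm
    _ ≤ ∑' j, ENNReal.ofReal (r j ^ n) := hvol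
    _ ≤ ∑' j, K * ENNReal.ofReal (r j ^ lam) := ENNReal.tsum_le_tsum fun j => by
        rw [← ENNReal.ofReal_mul (Real.rpow_nonneg ht.le _)]
        exact ENNReal.ofReal_le_ofReal (pow_le_rpow_sub_mul_rpow (hr j) (hlarge j).le hlamn)
    _ = K * ∑' j, ENNReal.ofReal (r j ^ lam) := ENNReal.tsum_mul_left

theorem statement0_general (n : ℕ) (lam : ℝ) (hlam0 : 0 < lam) (hlamn : lam < n) :
    ∃ C : ℝ, 0 < C ∧ ∀ ω : XX n × ℝ → ℝ≥0∞, Measurable ω →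
      choquetInt n lam (ntMax n ω) ≤ 1 →
      ∀ (x : XX n) (t : ℝ), 0 < t → ω (x, t) ≤ ENNReal.ofReal (C * t ^ (-lam)) := by
  refine ⟨1, one_pos, fun ω _ hchoquet x t ht => ?_⟩
  have hbound : ω (x, t) * ENNReal.ofReal (t ^ lam) ≤ 1 :=
    calc ω (x, t) * ENNReal.ofReal (t ^ lam) ≤ ω (x, t) * hausCap n lam (ball x t) := by
          gcongr
          exact rpow_le_hausCap_ball hlam0.le hlamn.le x ht
      _ ≤ choquetInt n lam (ntMax n ω) :=
          mul_hausCap_le_choquetInt fun y hy => le_ntMax ω ht hy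
      _ ≤ 1 := hchoquet
  rw [one_mul, Real.rpow_neg ht.le, ENNReal.ofReal_inv_of_pos (Real.rpow_pos_of_pos ht _)]
  exact ENNReal.le_inv_iff_mul_le.mpr hbound

theorem statement0 (n : ℕ) (hn : 1 ≤ n) (lam : ℝ) (hlam0 : 0 < lam) (hlamn : lam < n) :
    ∃ C : ℝ, 0 < C ∧ ∀ ω : XX n × ℝ → ℝ≥0∞, Measurable ω →
      choquetInt n lam (ntMax n ω) ≤ 1 →
      ∀ (x : XX n) (t : ℝ), 0 < t → ω (x, t) ≤ ENNReal.ofReal (C * t ^ (-lam)) :=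
  statement0_general n lam hlam0 hlamn
end

section
/- Fix an integer n ≥ 1 and λ ∈ (0,n). There is a constant C = C(n,λ) such that every FṪ^λ-atom a satisfies ‖a‖_{FṪ^λ} ≤ C. -/
/-!
Take the weight `ω = c · 1_{T(B)}` with `c = (r_B^λ M)⁻¹`, where `M = (1 - 2^{-λ})⁻¹`.
Its nontangential maximal function is at most `c` and vanishes off `B`, so every superlevel set
lies in `B`, whose capacity is at most `r_B^λ M`; hence the Choquet integral of `Nω` is at most
`c · r_B^λ M = 1`. Since the atom lives in `T(B)`, the weighted integral is
`c⁻¹ ∫_{T(B)} |a|² dx dt/t ≤ c⁻¹ r_B^{-λ} = M`.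
-/

open MeasureTheory Filter Metric Set
open scoped ENNReal NNReal Topology

/-- The sum `∑ⱼ 2^{-jλ}`. -/
noncomputable def geomCapConst (lam : ℝ) : ℝ := (1 - (2 : ℝ) ^ (-lam))⁻¹

lemma geomCapConst_pos {lam : ℝ} (hlam : 0 < lam) : 0 < geomCapConst lam :=
  inv_pos.2 (sub_pos.2 (Real.rpow_lt_one_of_one_lt_of_neg one_lt_two (neg_neg_of_pos hlam)))

/- A cover must consist of balls of positive radius, so even a single ball is paid for as the
cover by the balls `B(x₀, R 2^{-j})`. -/
lemma hausCap_le_of_subset_ball {n : ℕ} {lam : ℝ} (hlam : 0 < lam) {E : Set (XX n)}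
    {x₀ : XX n} {R : ℝ} (hR : 0 < R) (hE : E ⊆ ball x₀ R) :
    hausCap n lam E ≤ ENNReal.ofReal (R ^ lam) * ENNReal.ofReal (geomCapConst lam) := by
  set u : ℝ := (2 : ℝ) ^ (-lam)
  have hu0 : 0 < u := by positivity
  have hu1 : u < 1 := Real.rpow_lt_one_of_one_lt_of_neg one_lt_two (neg_neg_of_pos hlam)
  have hcover : E ⊆ ⋃ j : ℕ, ball x₀ (R * 2⁻¹ ^ j) :=
    hE.trans fun x hx => mem_iUnion.2 ⟨0, by simpa using hx⟩
  have hradius : ∀ j : ℕ, ENNReal.ofReal ((R * 2⁻¹ ^ j) ^ lam)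
      = ENNReal.ofReal (R ^ lam) * ENNReal.ofReal u ^ j := fun j => by
    rw [Real.mul_rpow hR.le (by positivity), ← Real.rpow_pow_comm (by norm_num),
      Real.inv_rpow zero_le_two, ← Real.rpow_neg zero_le_two,
      ENNReal.ofReal_mul (by positivity), ENNReal.ofReal_pow hu0.le]
  calc hausCap n lam E ≤ ∑' j : ℕ, ENNReal.ofReal ((R * 2⁻¹ ^ j) ^ lam) :=
        iInf₂_le_of_le (fun _ => x₀) _ (iInf₂_le_of_le (fun j => by positivity) hcover le_rfl)
    _ = ENNReal.ofReal (R ^ lam) * ENNReal.ofReal (geomCapConst lam) := by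
      rw [geomCapConst, tsum_congr hradius, ENNReal.tsum_mul_left, ENNReal.tsum_geometric,
        ENNReal.ofReal_inv_of_pos (sub_pos.2 hu1), ENNReal.ofReal_sub _ hu0.le, ENNReal.ofReal_one]

lemma hausCap_empty {n : ℕ} {lam : ℝ} (hlam : 0 < lam) : hausCap n lam (∅ : Set (XX n)) = 0 := by
  have hlim : Tendsto (fun R : ℝ => ENNReal.ofReal (R ^ lam) * ENNReal.ofReal (geomCapConst lam))
      (𝓝[>] 0) (𝓝 0) := by
    have hpow : Tendsto (fun R : ℝ => R ^ lam) (𝓝[>] 0) (𝓝 0) := by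
      simpa [Real.zero_rpow hlam.ne'] using
        (Real.continuousAt_rpow_const 0 lam (Or.inr hlam.le)).tendsto.mono_left nhdsWithin_le_nhds
    simpa using
      ENNReal.Tendsto.mul_const (ENNReal.tendsto_ofReal hpow) (Or.inr ENNReal.ofReal_ne_top)
  exact le_antisymm (ge_of_tendsto hlim (eventually_mem_nhdsWithin.mono fun R hR =>
    hausCap_le_of_subset_ball hlam hR (empty_subset (ball 0 R)))) zero_le

lemma choquetInt_le_of_le_of_eq_zero {n : ℕ} {lam : ℝ} (hlam : 0 < lam) {f : XX n → ℝ≥0∞}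
    {c R : ℝ} {x₀ : XX n} (hR : 0 < R) (hfc : ∀ x, f x ≤ ENNReal.ofReal c)
    (hf0 : ∀ x ∉ ball x₀ R, f x = 0) :
    choquetInt n lam f ≤
      ENNReal.ofReal c * (ENNReal.ofReal (R ^ lam) * ENNReal.ofReal (geomCapConst lam)) := by
  set K := ENNReal.ofReal (R ^ lam) * ENNReal.ofReal (geomCapConst lam)
  have hlevel : ∀ t ∈ Ioi (0 : ℝ), hausCap n lam {x | ENNReal.ofReal t < f x}
      ≤ (Iio c).indicator (fun _ => K) t := by
    intro t _
    by_cases htc : t < c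
    · rw [indicator_of_mem (mem_Iio.2 htc)]
      refine hausCap_le_of_subset_ball (x₀ := x₀) hlam hR fun x hx => ?_
      by_contra hxB
      simp [hf0 x hxB] at hx
    · have hempty : {x | ENNReal.ofReal t < f x} = ∅ := eq_empty_of_forall_notMem fun x hx =>
        (hx.trans_le (hfc x)).not_ge (ENNReal.ofReal_le_ofReal (not_lt.1 htc))
      rw [hempty, hausCap_empty hlam]
      exact zero_le
  calc choquetInt n lam f ≤ ∫⁻ t in Ioi (0 : ℝ), (Iio c).indicator (fun _ => K) t :=
        setLIntegral_mono (measurable_const.indicator measurableSet_Iio) hlevel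
    _ = ENNReal.ofReal c * K := by
      rw [lintegral_indicator_const measurableSet_Iio, Measure.restrict_apply measurableSet_Iio,
        Iio_inter_Ioi, Real.volume_Ioo, sub_zero, mul_comm]

lemma isClosed_setOf_ball_subset {X : Type*} [PseudoMetricSpace X] (U : Set X) :
    IsClosed {q : X × ℝ | ball q.1 q.2 ⊆ U} := by
  have hcompl : {q : X × ℝ | ball q.1 q.2 ⊆ U}ᶜ = ⋃ z ∈ Uᶜ, {q : X × ℝ | dist z q.1 < q.2} := by
    ext q
    simp only [mem_compl_iff, mem_ofPred_eq, not_subset, mem_ball, mem_iUnion, exists_prop]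
    exact exists_congr fun z => and_comm
  rw [← isOpen_compl_iff, hcompl]
  exact isOpen_biUnion fun z _ => isOpen_lt (continuous_const.dist continuous_fst) continuous_snd

lemma measurableSet_tent (n : ℕ) (xB : XX n) (rB : ℝ) : MeasurableSet (tent n xB rB) :=
  (measurableSet_lt measurable_const measurable_snd).inter
    (isClosed_setOf_ball_subset (ball xB rB)).measurableSet

lemma ntMax_le {n : ℕ} {ω : XX n × ℝ → ℝ≥0∞} {c : ℝ≥0∞} (hω : ∀ q, ω q ≤ c) (x : XX n) :
    ntMax n ω x ≤ c :=
  iSup₂_le fun q _ => hω q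

lemma ntMax_eq_zero_of_notMem_ball {n : ℕ} {ω : XX n × ℝ → ℝ≥0∞} {xB : XX n} {rB : ℝ}
    (hω : ∀ q ∉ tent n xB rB, ω q = 0) {x : XX n} (hx : x ∉ ball xB rB) : ntMax n ω x = 0 := by
  simp only [ntMax, ENNReal.iSup_eq_zero]
  exact fun q hq => hω q fun hqT => hx (hqT.2 (mem_ball.2 hq.2))

lemma admissible_indicator_tent {n : ℕ} {lam : ℝ} (hlam : 0 < lam) {F : XX n × ℝ → ℂ}
    {xB : XX n} {rB : ℝ} (hrB : 0 < rB) (hF : ∀ q ∉ tent n xB rB, F q = 0) :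
    Admissible n lam F ((tent n xB rB).indicator
      fun _ => ENNReal.ofReal (rB ^ lam * geomCapConst lam)⁻¹) := by
  set M := geomCapConst lam
  have hM : 0 < M := geomCapConst_pos hlam
  have hc : 0 < (rB ^ lam * M)⁻¹ := by positivity
  refine ⟨measurable_const.indicator (measurableSet_tent n xB rB), ?_, fun q _ hq => ?_⟩
  · calc choquetInt n lam (ntMax n _)
        ≤ ENNReal.ofReal (rB ^ lam * M)⁻¹ * (ENNReal.ofReal (rB ^ lam) * ENNReal.ofReal M) :=
          choquetInt_le_of_le_of_eq_zero hlam hrB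
            (ntMax_le fun q => indicator_le_self' (fun _ _ => zero_le) q)
            fun x hx => ntMax_eq_zero_of_notMem_ball (fun q hq => indicator_of_notMem hq _) hx
      _ = 1 := by
        rw [← ENNReal.ofReal_mul (by positivity), ← ENNReal.ofReal_mul hc.le,
          inv_mul_cancel₀ (by positivity), ENNReal.ofReal_one]
  · by_contra hFq
    rw [indicator_of_mem (not_imp_comm.1 (hF q) hFq)] at hq
    exact (ENNReal.ofReal_pos.2 hc).ne' hq

lemma setLIntegral_sq_div_indicator_le {α E : Type*} [MeasurableSpace α] [NormedAddCommGroup E]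
    {μ : Measure α} {S : Set α} (hS : MeasurableSet S) (U : Set α) {F : α → E}
    (hF : ∀ q ∉ S, F q = 0) (g : α → ℝ≥0∞) {c : ℝ≥0∞} (hc : c ≠ 0) :
    ∫⁻ q in U, ((‖F q‖₊ : ℝ≥0∞) ^ 2 / S.indicator (fun _ => c) q) * g q ∂μ
      ≤ (∫⁻ q in S, (‖F q‖₊ : ℝ≥0∞) ^ 2 * g q ∂μ) * c⁻¹ := by
  calc ∫⁻ q in U, ((‖F q‖₊ : ℝ≥0∞) ^ 2 / S.indicator (fun _ => c) q) * g q ∂μ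
      ≤ ∫⁻ q, ((‖F q‖₊ : ℝ≥0∞) ^ 2 / S.indicator (fun _ => c) q) * g q ∂μ :=
        setLIntegral_le_lintegral _ _
    _ = ∫⁻ q, S.indicator (fun q => (‖F q‖₊ : ℝ≥0∞) ^ 2 * g q * c⁻¹) q ∂μ := by
      refine lintegral_congr fun q => ?_
      by_cases hq : q ∈ S
      · simp only [indicator_of_mem hq, div_eq_mul_inv, mul_right_comm]
      · simp [indicator_of_notMem hq, hF q hq]
    _ = (∫⁻ q in S, (‖F q‖₊ : ℝ≥0∞) ^ 2 * g q ∂μ) * c⁻¹ := by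
      rw [lintegral_indicator hS, lintegral_mul_const' _ _ (ENNReal.inv_ne_top.2 hc)]

theorem statement4_general (n : ℕ) (lam : ℝ) (hlam0 : 0 < lam) :
    ∃ C : ℝ, 0 < C ∧ ∀ a : XX n × ℝ → ℂ, IsTentAtom n lam a →
      FTnorm n lam a ≤ ENNReal.ofReal C := by
  set M := geomCapConst lam
  have hM : 0 < M := geomCapConst_pos hlam0
  refine ⟨M ^ (1 / 2 : ℝ), by positivity, ?_⟩
  rintro a ⟨-, xB, rB, hrB, hsupp, hnorm⟩
  have hc : 0 < (rB ^ lam * M)⁻¹ := by positivity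
  have hweighted : ∫⁻ q in upperHalf n, ((‖a q‖₊ : ℝ≥0∞) ^ 2 /
        (tent n xB rB).indicator (fun _ => ENNReal.ofReal (rB ^ lam * M)⁻¹) q) *
        ENNReal.ofReal q.2⁻¹ ≤ ENNReal.ofReal M :=
    calc _ ≤ ENNReal.ofReal (rB ^ (-lam)) * (ENNReal.ofReal (rB ^ lam * M)⁻¹)⁻¹ :=
          (setLIntegral_sq_div_indicator_le (measurableSet_tent n xB rB) _ hsupp _
            (ENNReal.ofReal_pos.2 hc).ne').trans (mul_le_mul_left hnorm _)
      _ = ENNReal.ofReal M := by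
        rw [← ENNReal.ofReal_inv_of_pos hc, inv_inv, ← ENNReal.ofReal_mul (by positivity),
          Real.rpow_neg hrB.le, inv_mul_cancel_left₀ (by positivity)]
  calc FTnorm n lam a ≤ ENNReal.ofReal M ^ (1 / 2 : ℝ) :=
        iInf₂_le_of_le _ (admissible_indicator_tent hlam0 hrB hsupp)
          (ENNReal.rpow_le_rpow hweighted (by norm_num))
    _ = ENNReal.ofReal (M ^ (1 / 2 : ℝ)) := ENNReal.ofReal_rpow_of_pos hM

theorem statement4 (n : ℕ) (hn : 1 ≤ n) (lam : ℝ) (hlam0 : 0 < lam) (hlamn : lam < n) :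
    ∃ C : ℝ, 0 < C ∧ ∀ a : XX n × ℝ → ℂ, IsTentAtom n lam a →
      FTnorm n lam a ≤ ENNReal.ofReal C :=
  statement4_general n lam hlam0
end

section
/- Fix an integer n ≥ 1 and λ ∈ (0,n), and let L and (e^{−tL})_{t>0} be as in the context. Let ε > (n−λ)/2. There exists a constant C depending only on n, λ, ε, C₀, c₀ such that for every f ∈ L²(ℝⁿ) with ‖f‖_{L^{2,λ}_L} < ∞ and every (2,1,λ,ε)-molecule m associated to L, |∫_{ℝⁿ} f(x) \overline{m(x)} dx| ≤ C ‖f‖_{L^{2,λ}_L}. -/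
open MeasureTheory Filter Metric Set
open scoped ENNReal NNReal Topology ComplexConjugate

noncomputable section

/-- The Hilbert space `L²(ℝⁿ)` (complex valued). -/
abbrev HH (n : ℕ) := MeasureTheory.Lp ℂ 2 (volume : Measure (XX n))

/-- The domain of the `M`-th power of an unbounded operator `L`. -/
def iterDom {n : ℕ} (L : HH n →ₗ.[ℂ] HH n) : ℕ → Set (HH n)
  | 0 => Set.univ
  | (k+1) => {f | ∃ h : f ∈ L.domain, (L ⟨f, h⟩ : HH n) ∈ iterDom L k}

open Classical in
/-- `iterApp L M f = L^M f` (with junk value `0` off the domain). -/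
def iterApp {n : ℕ} (L : HH n →ₗ.[ℂ] HH n) : ℕ → HH n → HH n
  | 0, f => f
  | (k+1), f => if h : f ∈ L.domain then iterApp L k (L ⟨f, h⟩) else 0

/-- A nonnegative self-adjoint operator `L` on `L²(ℝⁿ)`, with dense domain, generating a
strongly continuous semigroup `T t = e^{-tL}` of bounded self-adjoint operators whose integral
kernels satisfy the Gaussian upper bound with constants `C₀, c₀`. -/
structure HeatData (n : ℕ) (C₀ c₀ : ℝ) where
  /-- the unbounded operator `L` -/
  L : HH n →ₗ.[ℂ] HH n
  denseDom : Dense (L.domain : Set (HH n))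
  selfAdj : IsSelfAdjoint L
  nonneg : ∀ f : L.domain, 0 ≤ (inner ℂ (L f) (f : HH n) : ℂ).re
  /-- the heat semigroup `T t = e^{-tL}` -/
  T : ℝ → (HH n →L[ℂ] HH n)
  T_selfAdj : ∀ t : ℝ, 0 < t → IsSelfAdjoint (T t)
  T_semigroup : ∀ s t : ℝ, 0 < s → 0 < t → T (s + t) = (T s).comp (T t)
  T_strong_cont : ∀ f : HH n, Tendsto (fun t => T t f) (𝓝[>] (0 : ℝ)) (𝓝 f)
  T_mem_iterDom : ∀ t : ℝ, 0 < t → ∀ f : HH n, ∀ M : ℕ, T t f ∈ iterDom L M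
  T_generator : ∀ f : HH n, ∀ hf : f ∈ L.domain,
    Tendsto (fun t : ℝ => (t : ℂ)⁻¹ • (f - T t f)) (𝓝[>] (0 : ℝ)) (𝓝 (L ⟨f, hf⟩))
  /-- the heat kernel `p_t(x,y)` -/
  ker : ℝ → XX n → XX n → ℂ
  ker_meas : ∀ t : ℝ, 0 < t → Measurable (Function.uncurry (ker t))
  ker_bound : ∀ t : ℝ, 0 < t → ∀ᵐ z : XX n × XX n,
    ‖ker t z.1 z.2‖ ≤ C₀ * t ^ (-(n : ℝ)/2) * Real.exp (-(dist z.1 z.2)^2 / (c₀ * t))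
  ker_repr : ∀ t : ℝ, 0 < t → ∀ f : HH n,
    (T t f : XX n → ℂ) =ᵐ[volume] fun x => ∫ y, ker t x y * (f : XX n → ℂ) y


/-- The function `(x,t) ↦ t² L e^{-t²L} f (x)` on the upper half-space. -/
def Qfun {n : ℕ} {C₀ c₀ : ℝ} (D : HeatData n C₀ c₀) (f : HH n) : XX n × ℝ → ℂ :=
  fun q => (q.2 : ℂ) ^ 2 * (iterApp D.L 1 (D.T (q.2 ^ 2) f) : XX n → ℂ) q.1

/-- `‖f‖_{FḢ^λ_L}`. -/
def FHnorm {n : ℕ} {C₀ c₀ : ℝ} (D : HeatData n C₀ c₀) (lam : ℝ) (f : HH n) : ℝ≥0∞ :=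
  FTnorm n lam (Qfun D f)

/-- The annuli `U_j(B)`. -/
def Uj (n : ℕ) (xB : XX n) (rB : ℝ) : ℕ → Set (XX n)
  | 0 => Metric.ball xB rB
  | (j+1) => Metric.ball xB ((2 : ℝ) ^ (j+1) * rB) \ Metric.ball xB ((2 : ℝ) ^ j * rB)

/-- The `L²`-norm of `g` on a subset `U` of `ℝⁿ`. -/
def locL2 {n : ℕ} (g : HH n) (U : Set (XX n)) : ℝ≥0∞ :=
  (∫⁻ x in U, ((‖(g : XX n → ℂ) x‖₊ : ℝ≥0∞)) ^ 2) ^ (1/2 : ℝ)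

/-- A `(2,M,λ)`-atom associated to `L`. -/
def IsOpAtom {n : ℕ} {C₀ c₀ : ℝ} (D : HeatData n C₀ c₀) (M : ℕ) (lam : ℝ) (a : HH n) : Prop :=
  ∃ (b : HH n) (xB : XX n) (rB : ℝ), 0 < rB ∧ b ∈ iterDom D.L M ∧ a = iterApp D.L M b ∧
    (∀ k ≤ M, ∀ᵐ x ∂(volume : Measure (XX n)),
      x ∉ Metric.ball xB rB → (iterApp D.L k b : XX n → ℂ) x = 0) ∧
    (∀ k ≤ M, rB ^ (2 * (k : ℝ)) * ‖iterApp D.L k b‖ ≤ rB ^ (2 * (M : ℝ) - lam / 2))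

/-- A `(2,M,λ,ε)`-molecule associated to `L`. -/
def IsOpMolecule {n : ℕ} {C₀ c₀ : ℝ} (D : HeatData n C₀ c₀) (M : ℕ) (lam ε : ℝ)
    (m : HH n) : Prop :=
  ∃ (b : HH n) (xB : XX n) (rB : ℝ), 0 < rB ∧ b ∈ iterDom D.L M ∧ m = iterApp D.L M b ∧
    ∀ k ≤ M, ∀ j : ℕ,
      ENNReal.ofReal (rB ^ (2 * (k : ℝ))) * locL2 (iterApp D.L k b) (Uj n xB rB j) ≤
        ENNReal.ofReal (rB ^ (2 * (M : ℝ)) * (2 : ℝ) ^ (-(j : ℝ) * ε) *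
          ((2 : ℝ) ^ (j : ℝ) * rB) ^ (-(lam / 2)))

/-- An atomic `(2,M,λ)`-representation of `f`. -/
def IsAtomicRep {n : ℕ} {C₀ c₀ : ℝ} (D : HeatData n C₀ c₀) (M : ℕ) (lam : ℝ)
    (f : HH n) (c : ℕ → ℂ) (a : ℕ → HH n) : Prop :=
  Summable (fun j => ‖c j‖) ∧ (∀ j, IsOpAtom D M lam (a j)) ∧
    Tendsto (fun N => ∑ j ∈ Finset.range N, c j • a j) atTop (𝓝 f)

/-- A molecular `(2,M,λ,ε)`-representation of `f`. -/
def IsMolecularRep {n : ℕ} {C₀ c₀ : ℝ} (D : HeatData n C₀ c₀) (M : ℕ) (lam ε : ℝ)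
    (f : HH n) (c : ℕ → ℂ) (m : ℕ → HH n) : Prop :=
  Summable (fun j => ‖c j‖) ∧ (∀ j, IsOpMolecule D M lam ε (m j)) ∧
    Tendsto (fun N => ∑ j ∈ Finset.range N, c j • m j) atTop (𝓝 f)

/-- The atomic norm `‖f‖_{FḢ^λ_{L,at,M}}`: the infimum of `∑ |λ_j|` over all atomic
`(2,M,λ)`-representations of `f`. -/
def atomicNorm {n : ℕ} {C₀ c₀ : ℝ} (D : HeatData n C₀ c₀) (M : ℕ) (lam : ℝ)
    (f : HH n) : ℝ≥0∞ :=
  sInf {s : ℝ≥0∞ | ∃ c a, IsAtomicRep D M lam f c a ∧ s = ∑' j, ENNReal.ofReal ‖c j‖}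

/-- The molecular norm: the infimum of `∑ |λ_j|` over all molecular
`(2,M,λ,ε)`-representations of `f`. -/
def molecularNorm {n : ℕ} {C₀ c₀ : ℝ} (D : HeatData n C₀ c₀) (M : ℕ) (lam ε : ℝ)
    (f : HH n) : ℝ≥0∞ :=
  sInf {s : ℝ≥0∞ | ∃ c m, IsMolecularRep D M lam ε f c m ∧ s = ∑' j, ENNReal.ofReal ‖c j‖}

/-- The quadratic Campanato norm
`‖f‖_{L^{2,λ}_L} = sup_B (r_B^{-λ} ∫_B |f - e^{-r_B²L}f|²)^{1/2}`. -/
def campNorm {n : ℕ} {C₀ c₀ : ℝ} (D : HeatData n C₀ c₀) (lam : ℝ) (f : HH n) : ℝ≥0∞ :=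
  ⨆ (xB : XX n) (rB : ℝ) (_ : 0 < rB),
    (ENNReal.ofReal (rB ^ (-lam)) *
      ∫⁻ x in Metric.ball xB rB, ((‖(↑(f - D.T (rB ^ 2) f) : XX n → ℂ) x‖₊ : ℝ≥0∞)) ^ 2) ^
      (1/2 : ℝ)

/-- `R` is the bounded inverse `(I + r²L)⁻¹`. -/
def IsResolvent {n : ℕ} {C₀ c₀ : ℝ} (D : HeatData n C₀ c₀) (r : ℝ)
    (R : HH n →L[ℂ] HH n) : Prop :=
  (∀ f : HH n, ∃ h : R f ∈ D.L.domain, R f + (r ^ 2 : ℂ) • D.L ⟨R f, h⟩ = f) ∧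
  (∀ g : HH n, ∀ hg : g ∈ D.L.domain, R (g + (r ^ 2 : ℂ) • D.L ⟨g, hg⟩) = g)

/-- The resolvent variant of the Campanato norm,
`sup_B (r_B^{-λ} ∫_B |f - (I + r_B²L)^{-1}f|²)^{1/2}`. -/
def campNormRes {n : ℕ} {C₀ c₀ : ℝ} (D : HeatData n C₀ c₀) (lam : ℝ)
    (Res : ℝ → (HH n →L[ℂ] HH n)) (f : HH n) : ℝ≥0∞ :=
  ⨆ (xB : XX n) (rB : ℝ) (_ : 0 < rB),
    (ENNReal.ofReal (rB ^ (-lam)) *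
      ∫⁻ x in Metric.ball xB rB, ((‖(↑(f - Res rB f) : XX n → ℂ) x‖₊ : ℝ≥0∞)) ^ 2) ^
      (1/2 : ℝ)

end

/-!
The pairing `⟪m, e^{-tL} f⟫` tends to `0` as `t → ∞`: the Gaussian bound gives
`‖e^{-tL} f‖_∞ ≲ t^{-n/4} ‖f‖₂`, and the annular decay of a molecule puts `m` in `L¹`.
Hence, with `B = B(x_B, r)` the ball of `m` and `σᵢ = 2^{i/2} r`,
`⟪m, f⟫ = ⟪m, f - e^{-r²L} f⟫ + ∑ᵢ ⟪m, e^{-σᵢ²L} (f - e^{-σᵢ²L} f)⟫`.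

For the first term, use Cauchy–Schwarz on each annulus `U_j(B)`: the ball `2^j B` is covered by
`≲ 2^{jn}` balls of radius `r`, on each of which the Campanato norm controls `f - e^{-r²L} f`,
and the decay `2^{-jε}` of `m` beats the growth `2^{j(n-λ)/2}` since `ε > (n-λ)/2`.
For the others, the Gaussian bound turns the Campanato estimate at scale `σᵢ` into
`‖e^{-σᵢ²L}(f - e^{-σᵢ²L} f)‖_∞ ≲ σᵢ^{(λ-n)/2} ‖f‖_{L^{2,λ}_L}`; against
`‖m‖_{L¹} ≲ r^{(n-λ)/2}` this is a geometric series in `i`, since `λ < n`.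
-/

section LIntegral

variable {α : Type*} [MeasurableSpace α] {μ : Measure α}

lemma lintegral_mul_le_L2_mul_L2 {f g : α → ℝ≥0∞} (hf : AEMeasurable f μ)
    (hg : AEMeasurable g μ) :
    ∫⁻ x, f x * g x ∂μ ≤ (∫⁻ x, f x ^ 2 ∂μ) ^ (1/2 : ℝ) * (∫⁻ x, g x ^ 2 ∂μ) ^ (1/2 : ℝ) := by
  simpa only [Pi.mul_apply, ENNReal.rpow_two] using
    ENNReal.lintegral_mul_le_Lp_mul_Lq μ Real.HolderConjugate.two_two hf hg

lemma setLIntegral_le_measure_mul_L2 {g : α → ℝ≥0∞} (hg : AEMeasurable g μ) (s : Set α) :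
    ∫⁻ x in s, g x ∂μ ≤ (μ s * ∫⁻ x in s, g x ^ 2 ∂μ) ^ (1/2 : ℝ) := by
  rw [ENNReal.mul_rpow_of_nonneg _ _ (by norm_num)]
  simpa using lintegral_mul_le_L2_mul_L2 (μ := μ.restrict s) (f := 1) aemeasurable_const
    hg.restrict

end LIntegral

lemma enorm_le_tsum_enorm_sub_of_tendsto {E : Type*} [NormedAddCommGroup E] {a : ℕ → E}
    (ha : Tendsto (fun N => ‖a N‖ₑ) atTop (𝓝 0)) : ‖a 0‖ₑ ≤ ∑' i, ‖a i - a (i + 1)‖ₑ := by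
  have partial_sum : ∀ N, ‖a 0‖ₑ ≤ ∑ i ∈ Finset.range N, ‖a i - a (i + 1)‖ₑ + ‖a N‖ₑ := by
    intro N
    induction N with
    | zero => simp
    | succ N ih =>
      calc _ ≤ _ := ih
        _ ≤ ∑ i ∈ Finset.range N, ‖a i - a (i + 1)‖ₑ +
            (‖a N - a (N + 1)‖ₑ + ‖a (N + 1)‖ₑ) := by
          gcongr
          simpa using enorm_add_le (a N - a (N + 1)) (a (N + 1))
        _ = _ := by rw [Finset.sum_range_succ, add_assoc]
  refine ge_of_tendsto (by simpa using tendsto_const_nhds.add ha)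
    (Eventually.of_forall fun N => (partial_sum N).trans ?_)
  gcongr
  exact ENNReal.sum_le_tsum _

lemma enorm_inner_le_lintegral {α 𝕜 E : Type*} [MeasurableSpace α] {μ : Measure α} [RCLike 𝕜]
    [NormedAddCommGroup E] [InnerProductSpace 𝕜 E] (f g : Lp E 2 μ) :
    ‖inner 𝕜 f g‖ₑ ≤ ∫⁻ x, ‖f x‖ₑ * ‖g x‖ₑ ∂μ := by
  rw [L2.inner_def]
  refine (enorm_integral_le_lintegral_enorm _).trans (lintegral_mono fun x => ?_)
  simp only [← ofReal_norm]
  rw [← ENNReal.ofReal_mul (norm_nonneg _)]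
  exact ENNReal.ofReal_le_ofReal (norm_inner_le_norm _ _)

lemma integral_mul_conj_eq_inner {n : ℕ} (f m : HH n) :
    ∫ x, (f : XX n → ℂ) x * conj ((m : XX n → ℂ) x) = inner ℂ m f := by
  simp_rw [L2.inner_def, RCLike.inner_apply]

lemma ENNReal.sq_mul_rpow_half (a b : ℝ≥0∞) : (a ^ 2 * b) ^ (1/2 : ℝ) = a * b ^ (1/2 : ℝ) := by
  rw [ENNReal.mul_rpow_of_nonneg _ _ (by norm_num), one_div]
  congr
  exact_mod_cast ENNReal.pow_rpow_inv_natCast (x := a) two_ne_zero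

lemma tsum_ofReal_rpow_pow_ne_top {b x : ℝ} (hb : 1 < b) (hx : x < 0) :
    ∑' i : ℕ, ENNReal.ofReal (b ^ x) ^ i ≠ ∞ := by
  rw [ENNReal.tsum_geometric]
  exact ENNReal.inv_ne_top.2
    (tsub_pos_of_lt (ENNReal.ofReal_lt_one.2 (Real.rpow_lt_one_of_one_lt_of_neg hb hx))).ne'

lemma two_rpow_mul_rpow_mul_sqrt_eq {r : ℝ} (hr : 0 < r) (lam ε : ℝ) (n j : ℕ) :
    2 ^ (-(j : ℝ) * ε) * (2 ^ (j : ℝ) * r) ^ (-(lam / 2)) * ((2 : ℝ) ^ (j * n)) ^ (1/2 : ℝ) =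
      r ^ (-(lam / 2)) * (2 ^ ((n - lam) / 2 - ε)) ^ j := by
  rw [Real.mul_rpow (by positivity) hr.le, ← Real.rpow_natCast 2 (j * n),
    ← Real.rpow_natCast (2 ^ _) j]
  simp only [← Real.rpow_mul zero_le_two]
  calc _ = r ^ (-(lam / 2)) * ((2 : ℝ) ^ (-(j : ℝ) * ε) * 2 ^ ((j : ℝ) * -(lam / 2)) *
        2 ^ (((j * n : ℕ) : ℝ) * (1 / 2))) := by
        ring
    _ = _ := by
      rw [← Real.rpow_add two_pos, ← Real.rpow_add two_pos]
      congr 2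
      push_cast
      ring

lemma ofReal_pow_mul_ofReal_rpow_sq {σ : ℝ} (hσ : 0 < σ) (n : ℕ) (a : ℝ) :
    ENNReal.ofReal σ ^ n * ENNReal.ofReal (σ ^ a) ^ 2 = ENNReal.ofReal (σ ^ (n + 2 * a)) := by
  rw [← ENNReal.ofReal_pow hσ.le, ← ENNReal.ofReal_pow (by positivity),
    ← ENNReal.ofReal_mul (by positivity), ← Real.rpow_natCast σ n, ← Real.rpow_natCast (σ ^ a) 2,
    ← Real.rpow_mul hσ.le, ← Real.rpow_add hσ, Nat.cast_two, mul_comm a]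

lemma ofReal_sq_rpow_neg_half {σ : ℝ} (hσ : 0 < σ) (n : ℕ) :
    ENNReal.ofReal ((σ ^ 2) ^ (-(n : ℝ) / 2)) = (ENNReal.ofReal σ ^ n)⁻¹ := by
  rw [← Real.rpow_natCast σ 2, ← Real.rpow_mul hσ.le, Nat.cast_two,
    mul_div_cancel₀ _ two_ne_zero, Real.rpow_neg hσ.le, Real.rpow_natCast,
    ENNReal.ofReal_inv_of_pos (by positivity), ENNReal.ofReal_pow hσ.le]

lemma ofReal_rpow_neg_mul_ofReal_pow_mul_rpow {b r : ℝ} (hb : 0 ≤ b) (hr : 0 < r) (a : ℝ)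
    (i : ℕ) :
    ENNReal.ofReal (r ^ (-a)) * ENNReal.ofReal ((b ^ i * r) ^ a) = ENNReal.ofReal (b ^ a) ^ i := by
  rw [← ENNReal.ofReal_mul (by positivity), ← ENNReal.ofReal_pow (by positivity),
    Real.mul_rpow (by positivity) hr.le, ← Real.rpow_pow_comm hb, mul_left_comm,
    ← Real.rpow_add hr, neg_add_cancel, Real.rpow_zero, mul_one]

section Covering

variable {E : Type*} [NormedAddCommGroup E] [NormedSpace ℝ E] [FiniteDimensional ℝ E]
  [MeasurableSpace E] [BorelSpace E] (μ : Measure E) [μ.IsAddHaarMeasure]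

/-- Double counting: `|B(0,ρ)| ∫_{B(z,R)} h = ∫ₓ ∫_{B(x,ρ) ∩ B(z,R)} h`, and only
`x ∈ B(z, R + ρ)` contribute. -/
lemma setLIntegral_ball_le_of_forall_ball {h : E → ℝ≥0∞} (hh : AEMeasurable h μ) {ρ R : ℝ}
    (hρ : 0 < ρ) (hR : 0 < R) {S : ℝ≥0∞} (hS : ∀ z, ∫⁻ x in ball z ρ, h x ∂μ ≤ S) (z : E) :
    ∫⁻ x in ball z R, h x ∂μ ≤ ENNReal.ofReal (((R + ρ) / ρ) ^ Module.finrank ℝ E) * S := by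
  set d := Module.finrank ℝ E
  set F : E → E → ℝ≥0∞ := fun y x => (ball z R).indicator h y * (ball y ρ).indicator 1 x
  have hF : AEMeasurable (Function.uncurry F) (μ.prod μ) := by
    refine (hh.comp_fst.indicator (measurableSet_ball.preimage measurable_fst)).mul
      (aemeasurable_one.indicator ?_)
    exact measurableSet_lt (measurable_snd.dist measurable_fst) measurable_const
  have hy : ∀ y, ∫⁻ x, F y x ∂μ =
      (ball z R).indicator h y * (ENNReal.ofReal (ρ ^ d) * μ (ball 0 1)) := fun y => by
    rw [lintegral_const_mul _ (measurable_one.indicator measurableSet_ball),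
      lintegral_indicator_one measurableSet_ball, Measure.addHaar_ball_of_pos μ y hρ]
  have hx : ∀ x, ∫⁻ y, F y x ∂μ ≤ (ball z (R + ρ)).indicator 1 x * S := fun x => calc
    _ ≤ ∫⁻ y, (ball z (R + ρ)).indicator 1 x * (ball x ρ).indicator h y ∂μ := by
      refine lintegral_mono fun y => ?_
      by_cases hyx : dist y x < ρ
      · by_cases hyz : dist y z < R
        · have hxz : dist x z < R + ρ := (dist_triangle_left x z y).trans_lt (by linarith)
          simp [F, indicator, hyx, hyz, hxz, dist_comm x y]
        · simp [F, indicator, hyz]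
      · simp [F, indicator, hyx, dist_comm x y]
    _ = (ball z (R + ρ)).indicator 1 x * ∫⁻ y in ball x ρ, h y ∂μ := by
      rw [lintegral_const_mul' _ _ (by simp [indicator]; split_ifs <;> simp),
        lintegral_indicator measurableSet_ball]
    _ ≤ _ := by gcongr; exact hS x
  have key : ENNReal.ofReal (ρ ^ d) * μ (ball 0 1) * ∫⁻ x in ball z R, h x ∂μ ≤
      ENNReal.ofReal (ρ ^ d) * μ (ball 0 1) * (ENNReal.ofReal (((R + ρ) / ρ) ^ d) * S) := calc
    _ = ∫⁻ y, ∫⁻ x, F y x ∂μ ∂μ := by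
      simp_rw [hy]
      rw [lintegral_mul_const'' _ (hh.indicator measurableSet_ball),
        lintegral_indicator measurableSet_ball, mul_comm]
    _ = ∫⁻ x, ∫⁻ y, F y x ∂μ ∂μ := lintegral_lintegral_swap hF
    _ ≤ ∫⁻ x, (ball z (R + ρ)).indicator 1 x * S ∂μ := lintegral_mono hx
    _ = ENNReal.ofReal (ρ ^ d * ((R + ρ) / ρ) ^ d) * μ (ball 0 1) * S := by
      rw [lintegral_mul_const _ (measurable_one.indicator measurableSet_ball),
        lintegral_indicator_one measurableSet_ball,
        Measure.addHaar_ball_of_pos μ z (by positivity), ← mul_pow, mul_div_cancel₀ _ hρ.ne']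
    _ = _ := by rw [ENNReal.ofReal_mul (by positivity)]; ring
  refine (ENNReal.mul_le_mul_iff_right ?_ ?_).1 key
  · exact mul_ne_zero (by simp; positivity) (measure_ball_pos μ 0 one_pos).ne'
  · exact ENNReal.mul_ne_top ENNReal.ofReal_ne_top measure_ball_lt_top.ne

end Covering

section Annuli

variable {n : ℕ}

lemma Uj_eq_disjointed (c : XX n) {r : ℝ} (hr : 0 ≤ r) :
    Uj n c r = disjointed fun j => ball c (2 ^ j * r) := by
  have hmono : Monotone fun j : ℕ => ball c (2 ^ j * r) := fun i j hij =>
    ball_subset_ball (by gcongr; norm_num)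
  ext1 j
  cases j with
  | zero => rw [disjointed_zero]; simp [Uj]
  | succ j => rw [hmono.disjointed_add_one]; rfl

lemma measurableSet_Uj (c : XX n) (r : ℝ) (j : ℕ) : MeasurableSet (Uj n c r j) := by
  cases j
  exacts [measurableSet_ball, measurableSet_ball.diff measurableSet_ball]

lemma Uj_subset_ball (c : XX n) {r : ℝ} (hr : 0 ≤ r) (j : ℕ) :
    Uj n c r j ⊆ ball c (2 ^ j * r) := by
  rw [Uj_eq_disjointed c hr]
  exact disjointed_subset _ j

lemma lintegral_eq_tsum_setLIntegral_Uj (h : XX n → ℝ≥0∞) (c : XX n) {r : ℝ} (hr : 0 < r) :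
    ∫⁻ x, h x = ∑' j, ∫⁻ x in Uj n c r j, h x := by
  have hcover : (⋃ j : ℕ, ball c (2 ^ j * r)) = univ :=
    eq_univ_of_forall fun x => mem_iUnion.2 <| by
      obtain ⟨j, hj⟩ := pow_unbounded_of_one_lt (dist x c / r) one_lt_two
      exact ⟨j, mem_ball.2 <| (div_lt_iff₀ hr).1 hj⟩
  rw [Uj_eq_disjointed c hr.le, ← lintegral_iUnion
    (MeasurableSet.disjointed fun _ => measurableSet_ball) (disjoint_disjointed _),
    iUnion_disjointed, hcover, Measure.restrict_univ]

end Annuli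

section Campanato

variable {n : ℕ}

lemma setLIntegral_ball_two_pow_mul_le {h : XX n → ℝ≥0∞} (hh : AEMeasurable h) {ρ : ℝ}
    (hρ : 0 < ρ) {S : ℝ≥0∞} (hS : ∀ z, ∫⁻ x in ball z ρ, h x ≤ S) (z : XX n) (j : ℕ) :
    ∫⁻ x in ball z (2 ^ j * ρ), h x ≤ 2 ^ ((j + 1) * n) * S := by
  refine (setLIntegral_ball_le_of_forall_ball volume hh hρ (by positivity) hS z).trans ?_
  rw [finrank_euclideanSpace_fin, add_div, mul_div_cancel_right₀ _ hρ.ne', div_self hρ.ne',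
    pow_mul]
  gcongr
  rw [← ENNReal.ofReal_ofNat, ← ENNReal.ofReal_pow zero_le_two,
    ← ENNReal.ofReal_pow (by positivity)]
  gcongr
  rw [pow_succ]
  linarith [one_le_pow₀ (M₀ := ℝ) one_le_two (n := j)]

lemma lintegral_ball_sub_T_le_campNorm {C₀ c₀ : ℝ} (D : HeatData n C₀ c₀) (lam : ℝ) (f : HH n)
    (z : XX n) {ρ : ℝ} (hρ : 0 < ρ) :
    ∫⁻ x in ball z ρ, ‖(f - D.T (ρ ^ 2) f) x‖ₑ ^ 2 ≤
      campNorm D lam f ^ 2 * ENNReal.ofReal (ρ ^ lam) := by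
  set I := ∫⁻ x in ball z ρ, ‖(f - D.T (ρ ^ 2) f) x‖ₑ ^ 2
  have hle : ENNReal.ofReal (ρ ^ (-lam)) * I ≤ campNorm D lam f ^ 2 := by
    have h : (ENNReal.ofReal (ρ ^ (-lam)) * I) ^ (1/2 : ℝ) ≤ campNorm D lam f :=
      le_iSup₂_of_le z ρ (le_iSup_of_le hρ le_rfl)
    rwa [one_div, ENNReal.rpow_inv_le_iff two_pos, ENNReal.rpow_two] at h
  calc
    _ = ENNReal.ofReal (ρ ^ lam) * (ENNReal.ofReal (ρ ^ (-lam)) * I) := by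
      rw [← mul_assoc, ← ENNReal.ofReal_mul (by positivity), ← Real.rpow_add hρ, add_neg_cancel,
        Real.rpow_zero, ENNReal.ofReal_one, one_mul]
    _ ≤ _ := by rw [mul_comm]; gcongr

end Campanato

section Gaussian

variable {n : ℕ} {c₀ : ℝ}

noncomputable def gaussWeight (c₀ : ℝ) (l : ℕ) : ℝ≥0∞ :=
  ENNReal.ofReal (Real.exp ((1 - 4 ^ l) / (4 * c₀)))

lemma exp_le_gaussWeight_of_mem_Uj (hc₀ : 0 < c₀) {σ : ℝ} (hσ : 0 < σ) {x y : XX n} {l : ℕ}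
    (hy : y ∈ Uj n x σ l) :
    ENNReal.ofReal (Real.exp (-dist x y ^ 2 / (c₀ * σ ^ 2))) ≤ gaussWeight c₀ l := by
  refine ENNReal.ofReal_le_ofReal (Real.exp_le_exp.2 ?_)
  cases l with
  | zero =>
    rw [pow_zero, sub_self, zero_div]
    exact div_nonpos_of_nonpos_of_nonneg (neg_nonpos.2 (sq_nonneg _)) (by positivity)
  | succ k =>
    have hd : 2 ^ k * σ ≤ dist x y := by simpa [dist_comm] using hy.2
    have hd2 : 4 ^ k * σ ^ 2 ≤ dist x y ^ 2 := calc
      4 ^ k * σ ^ 2 = (2 ^ k * σ) ^ 2 := by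
        rw [mul_pow, ← pow_mul, mul_comm k, pow_mul]; norm_num
      _ ≤ _ := pow_le_pow_left₀ (by positivity) hd 2
    rw [div_le_div_iff₀ (by positivity) (by positivity), pow_succ (4 : ℝ) k]
    nlinarith [mul_le_mul_of_nonneg_left hd2 (by positivity : (0:ℝ) ≤ 4 * c₀),
      mul_pos hc₀ (pow_pos hσ 2)]

lemma lintegral_gaussian_mul_le (hc₀ : 0 < c₀) {σ : ℝ} (hσ : 0 < σ) (x : XX n)
    (h : XX n → ℝ≥0∞) :
    ∫⁻ y, ENNReal.ofReal (Real.exp (-dist x y ^ 2 / (c₀ * σ ^ 2))) * h y ≤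
      ∑' l, gaussWeight c₀ l * ∫⁻ y in ball x (2 ^ l * σ), h y := by
  rw [lintegral_eq_tsum_setLIntegral_Uj _ x hσ]
  refine ENNReal.tsum_le_tsum fun l => ?_
  calc _ ≤ ∫⁻ y in Uj n x σ l, gaussWeight c₀ l * h y :=
        setLIntegral_mono' (measurableSet_Uj x σ l) fun y hy =>
          mul_le_mul_left (exp_le_gaussWeight_of_mem_Uj hc₀ hσ hy) _
    _ ≤ _ := by
      rw [lintegral_const_mul' (gaussWeight c₀ l) _ ENNReal.ofReal_ne_top]
      gcongr
      exact Uj_subset_ball x hσ.le l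

open Nat in
/-- From `x ^ (n + 1) / (n + 1)! ≤ exp x` at `x = 4 ^ l / (4 c₀)`. -/
lemma exp_one_sub_four_pow_mul_two_pow_le (hc₀ : 0 < c₀) (n l : ℕ) :
    Real.exp ((1 - 4 ^ l) / (4 * c₀)) * 2 ^ (l * n) ≤
      Real.exp (1 / (4 * c₀)) * ((n + 1)! * (4 * c₀) ^ (n + 1)) * (1 / 2) ^ l := by
  set x : ℝ := 4 ^ l / (4 * c₀)
  have hx : 0 < x := by positivity
  have hexp : Real.exp ((1 - 4 ^ l) / (4 * c₀)) = Real.exp (1 / (4 * c₀)) * Real.exp (-x) := by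
    rw [← Real.exp_add]; congr 1; ring
  have hfac : Real.exp (-x) * x ^ (n + 1) ≤ (n + 1)! := by
    have h := Real.pow_div_factorial_le_exp x hx.le (n + 1)
    rw [div_le_iff₀ (by positivity)] at h
    calc Real.exp (-x) * x ^ (n + 1) ≤ Real.exp (-x) * (Real.exp x * (n + 1)!) := by gcongr
      _ = (n + 1)! := by
        rw [← mul_assoc, ← Real.exp_add, neg_add_cancel, Real.exp_zero, one_mul]
  have hpow : (2 : ℝ) ^ (l * n) * 2 ^ l ≤ x ^ (n + 1) * (4 * c₀) ^ (n + 1) := by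
    rw [← mul_pow, div_mul_cancel₀ _ (by positivity), ← pow_add, ← pow_mul]
    calc (2 : ℝ) ^ (l * n + l) ≤ 4 ^ (l * n + l) := by gcongr; norm_num
      _ = 4 ^ (l * (n + 1)) := by ring
  rw [hexp, mul_assoc, mul_assoc (Real.exp _)]
  refine mul_le_mul_of_nonneg_left ?_ (Real.exp_pos _).le
  calc Real.exp (-x) * 2 ^ (l * n)
      = Real.exp (-x) * (2 ^ (l * n) * 2 ^ l) * (1 / 2) ^ l := by
        rw [mul_assoc, mul_assoc, ← mul_pow]; norm_num
    _ ≤ Real.exp (-x) * (x ^ (n + 1) * (4 * c₀) ^ (n + 1)) * (1 / 2) ^ l := by gcongr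
    _ ≤ (n + 1)! * (4 * c₀) ^ (n + 1) * (1 / 2) ^ l := by
      rw [← mul_assoc]; gcongr

lemma tsum_gaussWeight_mul_two_pow_ne_top (hc₀ : 0 < c₀) (n : ℕ) :
    ∑' l, gaussWeight c₀ l * 2 ^ (l * n) ≠ ∞ := by
  set A := Real.exp (1 / (4 * c₀)) * ((n + 1).factorial * (4 * c₀) ^ (n + 1))
  have hle : ∀ l, gaussWeight c₀ l * 2 ^ (l * n) ≤ ENNReal.ofReal A * 2⁻¹ ^ l := fun l => calc
    _ = ENNReal.ofReal (Real.exp ((1 - 4 ^ l) / (4 * c₀)) * 2 ^ (l * n)) := by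
      rw [gaussWeight, ENNReal.ofReal_mul (Real.exp_pos _).le, ENNReal.ofReal_pow zero_le_two,
        ENNReal.ofReal_ofNat]
    _ ≤ ENNReal.ofReal (A * (1 / 2) ^ l) :=
      ENNReal.ofReal_le_ofReal (exp_one_sub_four_pow_mul_two_pow_le hc₀ n l)
    _ = _ := by
      rw [ENNReal.ofReal_mul (by positivity), ENNReal.ofReal_pow (by norm_num), one_div,
        ENNReal.ofReal_inv_of_pos two_pos, ENNReal.ofReal_ofNat]
  refine ne_top_of_le_ne_top ?_ (ENNReal.tsum_le_tsum hle)
  rw [ENNReal.tsum_mul_left, ENNReal.tsum_geometric, ENNReal.one_sub_inv_two, inv_inv]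
  exact ENNReal.mul_ne_top ENNReal.ofReal_ne_top ENNReal.ofNat_ne_top

lemma setLIntegral_ball_two_pow_mul_le_of_forall_ball (g : HH n) {σ : ℝ} (hσ : 0 < σ)
    {S : ℝ≥0∞} (hS : ∀ z, ∫⁻ x in ball z σ, ‖g x‖ₑ ^ 2 ≤ ENNReal.ofReal σ ^ n * S ^ 2)
    (x : XX n) (l : ℕ) :
    ∫⁻ y in ball x (2 ^ l * σ), ‖g y‖ₑ ≤
      2 ^ (l * n) * ENNReal.ofReal σ ^ n * S * (2 ^ n * volume (ball (0 : XX n) 1)) ^ (1/2 : ℝ) :=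
  calc
    _ ≤ (volume (ball x (2 ^ l * σ)) * ∫⁻ y in ball x (2 ^ l * σ), ‖g y‖ₑ ^ 2) ^ (1/2 : ℝ) :=
      setLIntegral_le_measure_mul_L2 (Lp.aestronglyMeasurable g).enorm _
    _ ≤ (2 ^ (l * n) * ENNReal.ofReal σ ^ n * volume (ball (0 : XX n) 1) *
        (2 ^ ((l + 1) * n) * (ENNReal.ofReal σ ^ n * S ^ 2))) ^ (1/2 : ℝ) := by
      rw [Measure.addHaar_ball_of_pos _ _ (by positivity), finrank_euclideanSpace_fin, mul_pow,
        ENNReal.ofReal_mul (by positivity), ENNReal.ofReal_pow (by positivity),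
        ENNReal.ofReal_pow hσ.le, ENNReal.ofReal_pow zero_le_two, ENNReal.ofReal_ofNat, ← pow_mul]
      gcongr
      exact setLIntegral_ball_two_pow_mul_le ((Lp.aestronglyMeasurable g).enorm.pow_const 2) hσ
        hS x l
    _ = _ := by
      rw [← ENNReal.sq_mul_rpow_half]
      ring_nf

end Gaussian

noncomputable def heatConst (n : ℕ) (C₀ c₀ : ℝ) : ℝ≥0∞ :=
  ENNReal.ofReal C₀ * (∑' l, gaussWeight c₀ l * 2 ^ (l * n)) *
    (2 ^ n * volume (ball (0 : XX n) 1)) ^ (1/2 : ℝ)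

lemma heatConst_ne_top {n : ℕ} {C₀ c₀ : ℝ} (hc₀ : 0 < c₀) : heatConst n C₀ c₀ ≠ ∞ :=
  ENNReal.mul_ne_top (ENNReal.mul_ne_top ENNReal.ofReal_ne_top
    (tsum_gaussWeight_mul_two_pow_ne_top hc₀ n)) (ENNReal.rpow_ne_top_of_nonneg (by norm_num)
    (ENNReal.mul_ne_top (by simp) measure_ball_lt_top.ne))

namespace HeatData

variable {n : ℕ} {C₀ c₀ : ℝ}

lemma ae_enorm_T_le (D : HeatData n C₀ c₀) {t : ℝ} (ht : 0 < t) (g : HH n) :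
    ∀ᵐ x, ‖D.T t g x‖ₑ ≤ ENNReal.ofReal (C₀ * t ^ (-(n : ℝ) / 2)) *
      ∫⁻ y, ENNReal.ofReal (Real.exp (-dist x y ^ 2 / (c₀ * t))) * ‖g y‖ₑ := by
  have hbound := Measure.ae_ae_of_ae_prod (μ := volume) (ν := volume) (D.ker_bound t ht)
  filter_upwards [D.ker_repr t ht g, hbound] with x hx hbx
  rw [hx, ← lintegral_const_mul' _ _ ENNReal.ofReal_ne_top]
  refine (enorm_integral_le_lintegral_enorm _).trans (lintegral_mono_ae ?_)
  filter_upwards [hbx] with y hy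
  rw [enorm_mul, ← mul_assoc, ← ENNReal.ofReal_mul' (Real.exp_pos _).le, ← ofReal_norm]
  gcongr

/-- Split the Gaussian kernel over the annuli `U_l(x, σ)` and cover `B(x, 2^l σ)` by
`2^{(l+1)n}` balls of radius `σ`: the Gaussian weights beat this polynomial growth. -/
theorem ae_enorm_T_le_heatConst_mul (hc₀ : 0 < c₀) (D : HeatData n C₀ c₀) (g : HH n) {σ : ℝ}
    (hσ : 0 < σ) {S : ℝ≥0∞}
    (hS : ∀ z, ∫⁻ x in ball z σ, ‖g x‖ₑ ^ 2 ≤ ENNReal.ofReal σ ^ n * S ^ 2) :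
    ∀ᵐ x, ‖D.T (σ ^ 2) g x‖ₑ ≤ heatConst n C₀ c₀ * S := by
  set v₁ := volume (ball (0 : XX n) 1)
  set σ' := ENNReal.ofReal σ
  have hσ' : σ' ^ n ≠ 0 := pow_ne_zero _ (ENNReal.ofReal_pos.2 hσ).ne'
  filter_upwards [D.ae_enorm_T_le (by positivity : 0 < σ ^ 2) g] with x hx
  calc _ ≤ _ := hx
    _ ≤ ENNReal.ofReal (C₀ * (σ ^ 2) ^ (-(n : ℝ) / 2)) *
        ∑' l, gaussWeight c₀ l * (2 ^ (l * n) * σ' ^ n * S * (2 ^ n * v₁) ^ (1/2 : ℝ)) := by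
      gcongr
      refine (lintegral_gaussian_mul_le hc₀ hσ x _).trans (ENNReal.tsum_le_tsum fun l => ?_)
      gcongr
      exact setLIntegral_ball_two_pow_mul_le_of_forall_ball g hσ hS x l
    _ = ENNReal.ofReal C₀ * ((σ' ^ n)⁻¹ * σ' ^ n) * (∑' l, gaussWeight c₀ l * 2 ^ (l * n)) *
        (2 ^ n * v₁) ^ (1/2 : ℝ) * S := by
      rw [ENNReal.ofReal_mul' (by positivity), ofReal_sq_rpow_neg_half hσ]
      simp_rw [← mul_assoc]
      rw [ENNReal.tsum_mul_right, ENNReal.tsum_mul_right, ENNReal.tsum_mul_right]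
      ring
    _ = _ := by
      rw [ENNReal.inv_mul_cancel hσ' (ENNReal.pow_ne_top ENNReal.ofReal_ne_top), mul_one,
        heatConst]

lemma ae_enorm_T_sub_T_le (hc₀ : 0 < c₀) (D : HeatData n C₀ c₀) (lam : ℝ) (f : HH n) {σ : ℝ}
    (hσ : 0 < σ) :
    ∀ᵐ x, ‖D.T (σ ^ 2) (f - D.T (σ ^ 2) f) x‖ₑ ≤
      heatConst n C₀ c₀ * (campNorm D lam f * ENNReal.ofReal (σ ^ ((lam - n) / 2))) := by
  refine D.ae_enorm_T_le_heatConst_mul hc₀ _ hσ fun z => ?_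
  rw [mul_pow, mul_left_comm, ofReal_pow_mul_ofReal_rpow_sq hσ, mul_div_cancel₀ _ two_ne_zero,
    add_sub_cancel]
  exact lintegral_ball_sub_T_le_campNorm D lam f z hσ

lemma tendsto_enorm_inner_T_atTop (hn : 1 ≤ n) (hc₀ : 0 < c₀) (D : HeatData n C₀ c₀)
    (f m : HH n) (hm : ∫⁻ x, ‖m x‖ₑ ≠ ∞) :
    Tendsto (fun σ => ‖inner ℂ m (D.T (σ ^ 2) f)‖ₑ) atTop (𝓝 0) := by
  set A := (∫⁻ x, ‖m x‖ₑ) * heatConst n C₀ c₀ * eLpNorm f 2 volume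
  have hA : A ≠ ∞ := ENNReal.mul_ne_top (ENNReal.mul_ne_top hm (heatConst_ne_top hc₀))
    (Lp.eLpNorm_lt_top f).ne
  have hf : ∫⁻ x, ‖f x‖ₑ ^ 2 = eLpNorm f 2 volume ^ 2 := by
    simpa using (eLpNorm_nnreal_pow_eq_lintegral (f := (f : XX n → ℂ)) (μ := volume)
      (p := 2) two_ne_zero).symm
  have hbound : ∀ σ : ℝ, 0 < σ →
      ‖inner ℂ m (D.T (σ ^ 2) f)‖ₑ ≤ A * ENNReal.ofReal (σ ^ (-(n / 2 : ℝ))) := by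
    intro σ hσ
    have hT := D.ae_enorm_T_le_heatConst_mul hc₀ f hσ
      (S := ENNReal.ofReal (σ ^ (-(n / 2 : ℝ))) * eLpNorm f 2 volume) fun z => by
        rw [mul_pow, ← mul_assoc, ofReal_pow_mul_ofReal_rpow_sq hσ, mul_neg,
          mul_div_cancel₀ _ two_ne_zero, add_neg_cancel, Real.rpow_zero, ENNReal.ofReal_one,
          one_mul, ← hf]
        exact setLIntegral_le_lintegral _ _
    calc _ ≤ ∫⁻ x, ‖m x‖ₑ * ‖D.T (σ ^ 2) f x‖ₑ := enorm_inner_le_lintegral _ _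
      _ ≤ ∫⁻ x, ‖m x‖ₑ * (heatConst n C₀ c₀ *
          (ENNReal.ofReal (σ ^ (-(n / 2 : ℝ))) * eLpNorm f 2 volume)) :=
        lintegral_mono_ae (hT.mono fun x hx => by gcongr)
      _ = _ := by
        rw [lintegral_mul_const'' _ (Lp.aestronglyMeasurable m).enorm]
        ring
  have hdecay : Tendsto (fun σ : ℝ => A * ENNReal.ofReal (σ ^ (-(n / 2 : ℝ)))) atTop (𝓝 0) := by
    have h := ENNReal.tendsto_ofReal (tendsto_rpow_neg_atTop (y := n / 2) (by positivity))
    simpa using ENNReal.Tendsto.const_mul h (Or.inr hA)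
  exact tendsto_of_tendsto_of_tendsto_of_le_of_le' tendsto_const_nhds hdecay
    (Eventually.of_forall fun _ => zero_le) ((eventually_gt_atTop 0).mono hbound)

end HeatData

def HasMoleculeDecay {n : ℕ} (lam ε : ℝ) (m : HH n) (xB : XX n) (r : ℝ) : Prop :=
  ∀ j : ℕ, locL2 m (Uj n xB r j) ≤
    ENNReal.ofReal (2 ^ (-(j : ℝ) * ε) * (2 ^ (j : ℝ) * r) ^ (-(lam / 2)))

section Molecule

variable {n : ℕ} {lam ε r C₀ c₀ : ℝ} {xB : XX n} {m : HH n}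

lemma IsOpMolecule.exists_hasMoleculeDecay {D : HeatData n C₀ c₀} {M : ℕ}
    (hm : IsOpMolecule D M lam ε m) : ∃ xB r, 0 < r ∧ HasMoleculeDecay lam ε m xB r := by
  obtain ⟨b, xB, r, hr, -, rfl, hb⟩ := hm
  refine ⟨xB, r, hr, fun j => ?_⟩
  have h := hb M le_rfl j
  rw [mul_assoc, ENNReal.ofReal_mul (by positivity)] at h
  exact (ENNReal.mul_le_mul_iff_right (by simp; positivity) ENNReal.ofReal_ne_top).1 h

lemma HasMoleculeDecay.lintegral_enorm_mul_le (hm : HasMoleculeDecay lam ε m xB r) (hr : 0 < r)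
    {h : XX n → ℝ≥0∞} (hh : AEMeasurable h) {Θ : ℝ≥0∞}
    (hΘ : ∀ j : ℕ, ∫⁻ x in ball xB (2 ^ j * r), h x ^ 2 ≤ 2 ^ (j * n) * Θ) :
    ∫⁻ x, ‖m x‖ₑ * h x ≤ ENNReal.ofReal (r ^ (-(lam / 2))) *
      (∑' j : ℕ, ENNReal.ofReal (2 ^ ((n - lam) / 2 - ε)) ^ j) * Θ ^ (1/2 : ℝ) := by
  rw [lintegral_eq_tsum_setLIntegral_Uj _ xB hr, ← ENNReal.tsum_mul_left,
    ← ENNReal.tsum_mul_right]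
  refine ENNReal.tsum_le_tsum fun j => ?_
  calc _ ≤ locL2 m (Uj n xB r j) * (∫⁻ x in Uj n xB r j, h x ^ 2) ^ (1/2 : ℝ) :=
        lintegral_mul_le_L2_mul_L2 (Lp.aestronglyMeasurable m).enorm.restrict hh.restrict
    _ ≤ ENNReal.ofReal (2 ^ (-(j : ℝ) * ε) * (2 ^ (j : ℝ) * r) ^ (-(lam / 2))) *
        (2 ^ (j * n) * Θ) ^ (1/2 : ℝ) := by
      gcongr
      · exact hm j
      · exact (lintegral_mono_set (Uj_subset_ball xB hr.le j)).trans (hΘ j)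
    _ = _ := by
      rw [ENNReal.mul_rpow_of_nonneg _ _ (by norm_num), ← mul_assoc, ← ENNReal.ofReal_ofNat 2,
        ← ENNReal.ofReal_pow zero_le_two,
        ENNReal.ofReal_rpow_of_nonneg (by positivity) (by norm_num),
        ← ENNReal.ofReal_mul (by positivity), two_rpow_mul_rpow_mul_sqrt_eq hr,
        ENNReal.ofReal_mul (by positivity), ENNReal.ofReal_pow (by positivity)]

lemma HasMoleculeDecay.lintegral_enorm_le (hm : HasMoleculeDecay lam ε m xB r) (hr : 0 < r) :
    ∫⁻ x, ‖m x‖ₑ ≤ (∑' j : ℕ, ENNReal.ofReal (2 ^ ((n - lam) / 2 - ε)) ^ j) *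
      volume (ball (0 : XX n) 1) ^ (1/2 : ℝ) * ENNReal.ofReal (r ^ ((n - lam) / 2)) := by
  have h := hm.lintegral_enorm_mul_le hr (h := fun _ => 1) aemeasurable_const
    (Θ := ENNReal.ofReal (r ^ n) * volume (ball (0 : XX n) 1)) fun j => by
      rw [one_pow, setLIntegral_one, Measure.addHaar_ball_of_pos _ _ (by positivity),
        finrank_euclideanSpace_fin, mul_pow, ENNReal.ofReal_mul (by positivity),
        ENNReal.ofReal_pow (by positivity), ENNReal.ofReal_pow zero_le_two, ENNReal.ofReal_ofNat,
        ← pow_mul, mul_assoc]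
  simp only [mul_one] at h
  refine h.trans_eq ?_
  rw [ENNReal.mul_rpow_of_nonneg _ _ (by norm_num),
    ENNReal.ofReal_rpow_of_nonneg (by positivity) (by norm_num), ← Real.rpow_natCast,
    ← Real.rpow_mul hr.le]
  calc _ = (∑' j : ℕ, ENNReal.ofReal (2 ^ ((n - lam) / 2 - ε)) ^ j) *
        volume (ball (0 : XX n) 1) ^ (1/2 : ℝ) *
        (ENNReal.ofReal (r ^ (-(lam / 2))) * ENNReal.ofReal (r ^ ((n : ℝ) * (1/2)))) := by ring
    _ = _ := by
      rw [← ENNReal.ofReal_mul (by positivity), ← Real.rpow_add hr]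
      ring_nf

lemma HasMoleculeDecay.enorm_inner_sub_T_le (hm : HasMoleculeDecay lam ε m xB r) (hr : 0 < r)
    (D : HeatData n C₀ c₀) (f : HH n) :
    ‖inner ℂ m (f - D.T (r ^ 2) f)‖ₑ ≤ (2 ^ n) ^ (1/2 : ℝ) *
      (∑' j : ℕ, ENNReal.ofReal (2 ^ ((n - lam) / 2 - ε)) ^ j) * campNorm D lam f := by
  set K := campNorm D lam f
  set g := f - D.T (r ^ 2) f
  have hg : AEMeasurable fun x => ‖g x‖ₑ := (Lp.aestronglyMeasurable g).enorm
  have hΘ : ∀ j : ℕ, ∫⁻ x in ball xB (2 ^ j * r), ‖g x‖ₑ ^ 2 ≤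
      2 ^ (j * n) * ((K * ENNReal.ofReal (r ^ (lam / 2))) ^ 2 * 2 ^ n) := fun j => by
    rw [mul_pow, ← ENNReal.ofReal_pow (by positivity), ← Real.rpow_natCast (r ^ (lam / 2)) 2,
      ← Real.rpow_mul hr.le, Nat.cast_two, div_mul_cancel₀ _ two_ne_zero]
    refine (setLIntegral_ball_two_pow_mul_le (hg.pow_const 2) hr
      (fun z => lintegral_ball_sub_T_le_campNorm D lam f z hr) xB j).trans_eq ?_
    ring
  calc _ ≤ ∫⁻ x, ‖m x‖ₑ * ‖g x‖ₑ := enorm_inner_le_lintegral _ _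
    _ ≤ _ := hm.lintegral_enorm_mul_le hr hg hΘ
    _ = (2 ^ n) ^ (1/2 : ℝ) * (∑' j : ℕ, ENNReal.ofReal (2 ^ ((n - lam) / 2 - ε)) ^ j) * K *
        (ENNReal.ofReal (r ^ (-(lam / 2))) * ENNReal.ofReal (r ^ (lam / 2))) := by
      rw [ENNReal.sq_mul_rpow_half]; ring
    _ = _ := by
      rw [← ENNReal.ofReal_mul (by positivity), ← Real.rpow_add hr, neg_add_cancel,
        Real.rpow_zero, ENNReal.ofReal_one, mul_one]

lemma HasMoleculeDecay.enorm_inner_T_sub_T_le (hm : HasMoleculeDecay lam ε m xB r) (hr : 0 < r)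
    (hc₀ : 0 < c₀) (D : HeatData n C₀ c₀) (f : HH n) {σ : ℝ} (hσ : 0 < σ) :
    ‖inner ℂ m (D.T (σ ^ 2) (f - D.T (σ ^ 2) f))‖ₑ ≤
      (∑' j : ℕ, ENNReal.ofReal (2 ^ ((n - lam) / 2 - ε)) ^ j) *
        volume (ball (0 : XX n) 1) ^ (1/2 : ℝ) * heatConst n C₀ c₀ * campNorm D lam f *
        (ENNReal.ofReal (r ^ (-((lam - n) / 2))) * ENNReal.ofReal (σ ^ ((lam - n) / 2))) := calc
  _ ≤ ∫⁻ x, ‖m x‖ₑ * ‖D.T (σ ^ 2) (f - D.T (σ ^ 2) f) x‖ₑ := enorm_inner_le_lintegral _ _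
  _ ≤ ∫⁻ x, ‖m x‖ₑ *
      (heatConst n C₀ c₀ * (campNorm D lam f * ENNReal.ofReal (σ ^ ((lam - n) / 2)))) :=
    lintegral_mono_ae ((D.ae_enorm_T_sub_T_le hc₀ lam f hσ).mono fun x hx => by gcongr)
  _ ≤ (∑' j : ℕ, ENNReal.ofReal (2 ^ ((n - lam) / 2 - ε)) ^ j) *
        volume (ball (0 : XX n) 1) ^ (1/2 : ℝ) * ENNReal.ofReal (r ^ ((n - lam) / 2)) *
      (heatConst n C₀ c₀ * (campNorm D lam f * ENNReal.ofReal (σ ^ ((lam - n) / 2)))) := by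
    rw [lintegral_mul_const'' _ (Lp.aestronglyMeasurable m).enorm]
    gcongr
    exact hm.lintegral_enorm_le hr
  _ = _ := by rw [show ((n : ℝ) - lam) / 2 = -((lam - n) / 2) by ring]; ring

lemma HasMoleculeDecay.enorm_inner_T_le (hm : HasMoleculeDecay lam ε m xB r) (hr : 0 < r)
    (hn : 1 ≤ n) (hε : ((n : ℝ) - lam) / 2 < ε) (hc₀ : 0 < c₀) (D : HeatData n C₀ c₀) (f : HH n) :
    ‖inner ℂ m (D.T (r ^ 2) f)‖ₑ ≤ (∑' j : ℕ, ENNReal.ofReal (2 ^ ((n - lam) / 2 - ε)) ^ j) *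
      volume (ball (0 : XX n) 1) ^ (1/2 : ℝ) * heatConst n C₀ c₀ * campNorm D lam f *
      ∑' i : ℕ, ENNReal.ofReal (√2 ^ ((lam - n) / 2)) ^ i := by
  set σ : ℕ → ℝ := fun i => √2 ^ i * r
  have hσ_succ : ∀ i, σ (i + 1) ^ 2 = σ i ^ 2 + σ i ^ 2 := fun i => calc
    _ = √2 ^ 2 * σ i ^ 2 := by simp only [σ]; ring
    _ = _ := by rw [Real.sq_sqrt zero_le_two]; ring
  have hL1 : ∫⁻ x, ‖m x‖ₑ ≠ ∞ := ne_top_of_le_ne_top (ENNReal.mul_ne_top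
    (ENNReal.mul_ne_top (tsum_ofReal_rpow_pow_ne_top one_lt_two (by linarith))
      (ENNReal.rpow_ne_top_of_nonneg (by norm_num) measure_ball_lt_top.ne))
    ENNReal.ofReal_ne_top) (hm.lintegral_enorm_le hr)
  have htail : Tendsto (fun i => ‖inner ℂ m (D.T (σ i ^ 2) f)‖ₑ) atTop (𝓝 0) :=
    (D.tendsto_enorm_inner_T_atTop hn hc₀ f m hL1).comp <|
      (tendsto_pow_atTop_atTop_of_one_lt Real.one_lt_sqrt_two).atTop_mul_const hr
  calc _ = ‖inner ℂ m (D.T (σ 0 ^ 2) f)‖ₑ := by simp [σ]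
    _ ≤ ∑' i, ‖inner ℂ m (D.T (σ i ^ 2) f) - inner ℂ m (D.T (σ (i + 1) ^ 2) f)‖ₑ :=
      enorm_le_tsum_enorm_sub_of_tendsto htail
    _ = ∑' i, ‖inner ℂ m (D.T (σ i ^ 2) (f - D.T (σ i ^ 2) f))‖ₑ := by
      congr! 3 with i
      rw [← inner_sub_right, hσ_succ, D.T_semigroup _ _ (by positivity) (by positivity),
        ContinuousLinearMap.comp_apply, map_sub]
    _ ≤ _ := by
      rw [← ENNReal.tsum_mul_left]
      refine ENNReal.tsum_le_tsum fun i => (hm.enorm_inner_T_sub_T_le hr hc₀ D f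
        (by positivity)).trans_eq ?_
      rw [ofReal_rpow_neg_mul_ofReal_pow_mul_rpow (Real.sqrt_nonneg 2) hr]

end Molecule

theorem statement16_general (n : ℕ) (hn : 1 ≤ n) (lam : ℝ) (hlamn : lam < n)
    (C₀ c₀ : ℝ) (hc₀ : 0 < c₀) (ε : ℝ) (hε : ((n : ℝ) - lam) / 2 < ε) :
    ∃ C : ℝ, 0 < C ∧ ∀ (D : HeatData n C₀ c₀) (f : HH n), campNorm D lam f < ∞ →
      ∀ m : HH n, IsOpMolecule D 1 lam ε m →
        ENNReal.ofReal ‖∫ x, (f : XX n → ℂ) x * conj ((m : XX n → ℂ) x)‖ ≤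
          ENNReal.ofReal C * campNorm D lam f := by
  set S₁ := ∑' j : ℕ, ENNReal.ofReal (2 ^ ((n - lam) / 2 - ε)) ^ j
  set S₂ := ∑' i : ℕ, ENNReal.ofReal (√2 ^ ((lam - n) / 2)) ^ i
  set C := (2 ^ n) ^ (1/2 : ℝ) * S₁ +
    S₁ * volume (ball (0 : XX n) 1) ^ (1/2 : ℝ) * heatConst n C₀ c₀ * S₂
  have hC : C ≠ ∞ := by
    have := tsum_ofReal_rpow_pow_ne_top one_lt_two (x := (n - lam) / 2 - ε) (by linarith)
    have := tsum_ofReal_rpow_pow_ne_top Real.one_lt_sqrt_two (x := (lam - n) / 2) (by linarith)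
    have : volume (ball (0 : XX n) 1) ≠ ∞ := measure_ball_lt_top.ne
    have := heatConst_ne_top (n := n) (C₀ := C₀) hc₀
    finiteness
  refine ⟨C.toReal + 1, by positivity, fun D f _ m hm => ?_⟩
  obtain ⟨xB, r, hr, hdecay⟩ := hm.exists_hasMoleculeDecay
  rw [integral_mul_conj_eq_inner, ofReal_norm]
  calc ‖inner ℂ m f‖ₑ = ‖inner ℂ m (f - D.T (r ^ 2) f) + inner ℂ m (D.T (r ^ 2) f)‖ₑ := by
        rw [inner_sub_right, sub_add_cancel]
    _ ≤ ‖inner ℂ m (f - D.T (r ^ 2) f)‖ₑ + ‖inner ℂ m (D.T (r ^ 2) f)‖ₑ := enorm_add_le _ _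
    _ ≤ C * campNorm D lam f := by
      grw [hdecay.enorm_inner_sub_T_le hr D f, hdecay.enorm_inner_T_le hr hn hε hc₀ D f]
      exact le_of_eq (by ring)
    _ ≤ ENNReal.ofReal (C.toReal + 1) * campNorm D lam f := by
      gcongr
      exact (ENNReal.le_ofReal_iff_toReal_le hC (by positivity)).2 (by linarith)

theorem statement16 (n : ℕ) (hn : 1 ≤ n) (lam : ℝ) (hlam0 : 0 < lam) (hlamn : lam < n)
    (C₀ c₀ : ℝ) (hC₀ : 0 < C₀) (hc₀ : 0 < c₀) (ε : ℝ) (hε : ((n : ℝ) - lam) / 2 < ε) :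
    ∃ C : ℝ, 0 < C ∧ ∀ (D : HeatData n C₀ c₀) (f : HH n), campNorm D lam f < ∞ →
      ∀ m : HH n, IsOpMolecule D 1 lam ε m →
        ENNReal.ofReal ‖∫ x, (f : XX n → ℂ) x * conj ((m : XX n → ℂ) x)‖ ≤
          ENNReal.ofReal C * campNorm D lam f :=
  statement16_general n hn lam hlamn C₀ c₀ hc₀ ε hε
end
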